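/- arXiv:1503.01404 — 2 statements merged into one kernel-verified Lean document; each statement's English description precedes it below -/
import Mathlib

section
/- Let K = F_q be a finite field and X ⊆ P^{s-1} a set of clutter type (supp(y^{v_i}) ⊄ supp(y^{v_j}) for i ≠ j). If G is a minimal generating set of I(X) consisting of binomials, then for each pair 1 ≤ i < j ≤ s there is a binomial g_{ij} ∈ G of the form ±(t_i^{c_{ij}} t_j - t^{b_{ij}}) with c_{ij} a positive integer at most q and b_{ij} ∈ N^s \ {0}. -/
open MvPolynomial

/-- Evaluation of the monomials `y^{v_1},…,y^{v_s}` at a point `x ∈ K^n`. -/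
noncomputable def monEval {K : Type} [Field K] {n s : ℕ} (v : Fin s → Fin n → ℕ)
    (x : Fin n → K) : Fin s → K := fun i => ∏ j, x j ^ v i j

/-- The subset of `ℙ^{s-1}` parameterized by the monomials `y^{v_1},…,y^{v_s}`. -/
noncomputable def paramSet {K : Type} [Field K] {n s : ℕ} (v : Fin s → Fin n → ℕ) :
    Set (Projectivization K (Fin s → K)) :=
  { p | ∃ (x : Fin n → K) (h : monEval v x ≠ 0), p = Projectivization.mk K (monEval v x) h }

/-- The vanishing ideal of a set of projective points: the ideal generated by the
homogeneous polynomials vanishing at all points of the set. -/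
noncomputable def vanishIdeal {K : Type} [Field K] {s : ℕ}
    (X : Set (Projectivization K (Fin s → K))) : Ideal (MvPolynomial (Fin s) K) :=
  Ideal.span { f | (∃ d, f.IsHomogeneous d) ∧ ∀ p ∈ X, eval p.rep f = 0 }

/-- `supp(y^{v_i}) ⊄ supp(y^{v_j})` for all `i ≠ j`. -/
def clutterType {n s : ℕ} (v : Fin s → Fin n → ℕ) : Prop :=
  ∀ i j : Fin s, i ≠ j → ¬ ({k | v i k ≠ 0} ⊆ {k | v j k ≠ 0})

/-!
Since `x^q = x` on `F_q`, the binomial `t_i^q t_j - t_i t_j^q` lies in `I(X) = (G)`. Every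
monomial of an element of `(G)` is divisible by a monomial of some element of `G`, so some
binomial `t^a - t^b ∈ G` has `t^a ∣ t_i^q t_j`. The clutter condition puts every coordinate
point `e_k` in `X`, and a nonzero binomial of `I(X)` cannot have a monomial that is nonzero at
some `e_k`: evaluating at `e_k` forces both monomials to be powers of `t_k`, of different
degrees, and then homogeneity of `I(X)` puts that power of `t_k` itself in `I(X)`. Hence `t^a`
is neither a power of `t_i` nor of `t_j`, so `t^a = t_i^c t_j` with `0 < c ≤ q`, and likewise
`t^b ≠ 1`.
-/

attribute [local instance] MvPolynomial.gradedAlgebra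

theorem MvPolynomial.exists_mem_support_le_of_mem_span {R σ : Type*} [CommSemiring R]
    {G : Set (MvPolynomial σ R)} {f : MvPolynomial σ R} (hf : f ∈ Ideal.span G)
    {m : σ →₀ ℕ} (hm : m ∈ f.support) : ∃ g ∈ G, ∃ a ∈ g.support, a ≤ m := by
  classical
  let I : Ideal (MvPolynomial σ R) :=
    { carrier := {f | ∀ m ∈ f.support, ∃ g ∈ G, ∃ a ∈ g.support, a ≤ m}
      add_mem' := fun hf hg m hm => (Finset.mem_union.mp (support_add hm)).elim (hf m) (hg m)
      zero_mem' := by simp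
      smul_mem' := fun h f hf m hm => by
        obtain ⟨b, -, a', ha', rfl⟩ := Finset.mem_add.mp (support_mul h f hm)
        obtain ⟨g, hg, a, ha, hle⟩ := hf a' ha'
        exact ⟨g, hg, a, ha, hle.trans le_add_self⟩ }
  exact (Ideal.span_le (I := I)).mpr (fun g hg a ha => ⟨g, hg, a, ha, le_rfl⟩) hf m hm

theorem MvPolynomial.mem_support_monomial_sub_monomial {R σ : Type*} [CommRing R] [Nontrivial R]
    {A B : σ →₀ ℕ} (hAB : A ≠ B) : A ∈ (monomial A (1 : R) - monomial B 1).support := by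
  classical
  rw [mem_support_iff, coeff_sub, coeff_monomial, coeff_monomial, if_pos rfl, if_neg hAB.symm,
    sub_zero]
  exact one_ne_zero

theorem MvPolynomial.eval_piSingle_monomial_eq_zero_iff {K σ : Type*} [Field K] [DecidableEq σ]
    (i : σ) {c : K} (hc : c ≠ 0) (A : σ →₀ ℕ) :
    eval (Pi.single i c) (monomial A (1 : K)) = 0 ↔ ¬ A.support ⊆ {i} := by
  rw [eval_monomial, one_mul, Finsupp.prod, Finset.prod_eq_zero_iff, Finset.not_subset]
  refine exists_congr fun k => and_congr_right fun hk => ?_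
  rw [Finsupp.mem_support_iff] at hk
  by_cases hki : k = i
  · simp [hki, hc]
  · simp [hki, hk]

theorem Finsupp.exists_eq_single_add_single {σ : Type*} {i j : σ} (hij : i ≠ j) {q : ℕ}
    {A : σ →₀ ℕ} (hA : A ≤ single i q + single j 1) (hi : ¬ A.support ⊆ {i})
    (hj : ¬ A.support ⊆ {j}) : ∃ c, 0 < c ∧ c ≤ q ∧ A = single i c + single j 1 := by
  have hle (k : σ) : A k ≤ single i q k + single j 1 k := hA k
  have hAi : A i ≤ q := by simpa [single_apply, hij] using hle i
  have hAj : A j ≤ 1 := by simpa [single_apply, hij] using hle j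
  have hA0 (k : σ) (hki : k ≠ i) (hkj : k ≠ j) : A k = 0 := by
    simpa [single_apply, hki.symm, hkj.symm] using hle k
  have hmem_pair (k : σ) (hk : k ∈ A.support) : k = i ∨ k = j := by
    by_contra! h
    exact mem_support_iff.mp hk (hA0 k h.1 h.2)
  obtain ⟨k, hk, hki⟩ := Finset.not_subset.mp hi
  obtain ⟨l, hl, hlj⟩ := Finset.not_subset.mp hj
  have hAj0 : A j ≠ 0 :=
    (hmem_pair k hk).resolve_left (by simpa using hki) ▸ mem_support_iff.mp hk
  have hAi0 : A i ≠ 0 :=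
    (hmem_pair l hl).resolve_right (by simpa using hlj) ▸ mem_support_iff.mp hl
  refine ⟨A i, Nat.pos_of_ne_zero hAi0, hAi, ?_⟩
  ext m
  by_cases hmi : m = i
  · simp [hmi, hij]
  by_cases hmj : m = j
  · simp [hmj, hij.symm]
    omega
  simp [Ne.symm hmi, Ne.symm hmj, hA0 m hmi hmj]

noncomputable def coordPoint (K : Type) [Field K] {s : ℕ} (i : Fin s) :
    Projectivization K (Fin s → K) :=
  Projectivization.mk K (Pi.single i 1) (by simp)

section VanishingIdeal

variable {K : Type} [Field K] {s : ℕ}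

theorem vanishIdeal_isHomogeneous (X : Set (Projectivization K (Fin s → K))) :
    (vanishIdeal X).IsHomogeneous (homogeneousSubmodule (Fin s) K) := by
  apply Ideal.homogeneous_span
  rintro f ⟨⟨d, hd⟩, -⟩
  exact ⟨d, (mem_homogeneousSubmodule _ _).mpr hd⟩

theorem monomial_mem_vanishIdeal_of_sub_mem {X : Set (Projectivization K (Fin s → K))}
    {A B : Fin s →₀ ℕ} (h : monomial A (1 : K) - monomial B 1 ∈ vanishIdeal X)
    (hAB : A.degree ≠ B.degree) : monomial A (1 : K) ∈ vanishIdeal X := by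
  have hc : homogeneousComponent A.degree (monomial A (1 : K) - monomial B 1) ∈ vanishIdeal X :=
    decomposition.decompose'_apply (R := K) (σ := Fin s) _ _ ▸
      vanishIdeal_isHomogeneous X A.degree h
  have hA : monomial A (1 : K) ∈ homogeneousSubmodule (Fin s) K A.degree :=
    (mem_homogeneousSubmodule _ _).mpr (isHomogeneous_monomial _ rfl)
  have hB : monomial B (1 : K) ∈ homogeneousSubmodule (Fin s) K B.degree :=
    (mem_homogeneousSubmodule _ _).mpr (isHomogeneous_monomial _ rfl)
  rwa [map_sub, homogeneousComponent_of_mem hA, if_pos rfl,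
    homogeneousComponent_of_mem hB, if_neg hAB, sub_zero] at hc

theorem eval_rep_eq_zero_of_mem_vanishIdeal {X : Set (Projectivization K (Fin s → K))}
    {f : MvPolynomial (Fin s) K} (hf : f ∈ vanishIdeal X) {p : Projectivization K (Fin s → K)}
    (hp : p ∈ X) : eval p.rep f = 0 := by
  have hle : vanishIdeal X ≤ RingHom.ker (eval p.rep) :=
    Ideal.span_le.mpr fun g hg => RingHom.mem_ker.mpr (hg.2 p hp)
  exact RingHom.mem_ker.mp (hle hf)


theorem exists_eval_piSingle_eq_zero {X : Set (Projectivization K (Fin s → K))} {i : Fin s}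
    (hX : coordPoint K i ∈ X) {f : MvPolynomial (Fin s) K} (hf : f ∈ vanishIdeal X) :
    ∃ c : K, c ≠ 0 ∧ eval (Pi.single i c) f = 0 := by
  obtain ⟨c, hc⟩ := (Projectivization.mk_eq_mk_iff K _ _ _ _).mp (coordPoint K i).mk_rep
  refine ⟨c, c.ne_zero, ?_⟩
  rw [← mul_one (c : K), ← smul_eq_mul, Pi.single_smul', ← Units.smul_def, hc]
  exact eval_rep_eq_zero_of_mem_vanishIdeal hf hX

theorem not_support_subset_singleton_of_sub_mem_vanishIdeal
    {X : Set (Projectivization K (Fin s → K))} {i : Fin s} (hX : coordPoint K i ∈ X)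
    {A B : Fin s →₀ ℕ} (h : monomial A (1 : K) - monomial B 1 ∈ vanishIdeal X) (hAB : A ≠ B) :
    ¬ A.support ⊆ {i} := by
  intro hA
  obtain ⟨c, hc, hev⟩ := exists_eval_piSingle_eq_zero hX h
  rw [map_sub, sub_eq_zero] at hev
  have hB : B.support ⊆ {i} := by
    by_contra hB
    exact (eval_piSingle_monomial_eq_zero_iff i hc A).not.mpr (not_not.mpr hA)
      (hev.trans ((eval_piSingle_monomial_eq_zero_iff i hc B).mpr hB))
  rw [Finsupp.support_subset_singleton] at hA hB
  have hdeg : A.degree ≠ B.degree := by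
    rw [hA, hB, Finsupp.degree_single, Finsupp.degree_single]
    exact fun h => hAB (by rw [hA, hB, h])
  obtain ⟨c', hc', hev'⟩ := exists_eval_piSingle_eq_zero hX
    (monomial_mem_vanishIdeal_of_sub_mem h hdeg)
  exact (eval_piSingle_monomial_eq_zero_iff i hc' A).mp hev'
    (Finsupp.support_subset_singleton.mpr hA)

theorem coordPoint_mem_paramSet {n : ℕ} {v : Fin s → Fin n → ℕ}
    (hcl : clutterType v) (i : Fin s) : coordPoint K i ∈ paramSet v := by
  have hx : monEval v (fun m => if v i m ≠ 0 then (1 : K) else 0) = Pi.single i 1 := by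
    funext k
    by_cases hki : k = i
    · subst hki
      rw [Pi.single_eq_same]
      refine Finset.prod_eq_one fun m _ => ?_
      by_cases h : v k m = 0 <;> simp [h]
    · obtain ⟨m, hmk, hmi⟩ := Set.not_subset.mp (hcl k i hki)
      rw [Pi.single_eq_of_ne hki]
      exact Finset.prod_eq_zero (Finset.mem_univ m) (by simp_all)
  refine ⟨_, by rw [hx]; simp, ?_⟩
  simp_rw [coordPoint, hx]

theorem binomial_mem_vanishIdeal [Fintype K] (X : Set (Projectivization K (Fin s → K)))
    (i j : Fin s) :
    monomial (Finsupp.single i (Fintype.card K) + Finsupp.single j 1) (1 : K)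
      - monomial (Finsupp.single i 1 + Finsupp.single j (Fintype.card K)) 1 ∈ vanishIdeal X := by
  have hmon (a b : ℕ) : monomial (Finsupp.single i a + Finsupp.single j b) (1 : K) =
      MvPolynomial.X i ^ a * MvPolynomial.X j ^ b := by
    rw [X_pow_eq_monomial, X_pow_eq_monomial, monomial_mul, one_mul]
  rw [hmon, hmon]
  refine Ideal.subset_span ⟨⟨Fintype.card K + 1, ?_⟩, fun p _ => ?_⟩
  · refine ((isHomogeneous_X_pow i _).mul (isHomogeneous_X_pow j 1)).sub ?_
    rw [add_comm]
    exact (isHomogeneous_X_pow i 1).mul (isHomogeneous_X_pow j _)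
  · simp only [map_sub, map_mul, map_pow, eval_X, FiniteField.pow_card, pow_one, sub_self]

theorem eq_single_add_single_of_sub_mem_vanishIdeal {X : Set (Projectivization K (Fin s → K))}
    (hX : ∀ k, coordPoint K k ∈ X) {i j : Fin s} (hij : i ≠ j) {q : ℕ} {A B : Fin s →₀ ℕ}
    (h : monomial A (1 : K) - monomial B 1 ∈ vanishIdeal X) (hAB : A ≠ B)
    (hA : A ≤ Finsupp.single i q + Finsupp.single j 1) :
    ∃ c, 0 < c ∧ c ≤ q ∧ A = Finsupp.single i c + Finsupp.single j 1 ∧ B ≠ 0 := by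
  obtain ⟨c, hc, hcq, rfl⟩ := Finsupp.exists_eq_single_add_single hij hA
    (not_support_subset_singleton_of_sub_mem_vanishIdeal (hX i) h hAB)
    (not_support_subset_singleton_of_sub_mem_vanishIdeal (hX j) h hAB)
  refine ⟨c, hc, hcq, rfl, ?_⟩
  rintro rfl
  rw [← neg_mem_iff, neg_sub] at h
  exact not_support_subset_singleton_of_sub_mem_vanishIdeal (hX i) h hAB.symm (by simp)

end VanishingIdeal

theorem stmt2_general {K : Type} [Field K] [Fintype K] {n s : ℕ} (v : Fin s → Fin n → ℕ)
    (hcl : clutterType v) (G : Set (MvPolynomial (Fin s) K))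
    (hgen : Ideal.span G = vanishIdeal (paramSet v))
    (hbin : ∀ g ∈ G, ∃ a b : Fin s →₀ ℕ, g = monomial a 1 - monomial b 1) :
    ∀ i j : Fin s, i < j → ∃ g ∈ G, ∃ c : ℕ, 0 < c ∧ c ≤ Fintype.card K ∧
      ∃ b : Fin s →₀ ℕ, b ≠ 0 ∧
        (g = monomial (Finsupp.single i c + Finsupp.single j 1) 1 - monomial b 1 ∨
         g = monomial b 1 - monomial (Finsupp.single i c + Finsupp.single j 1) 1) := by
  intro i j hij
  have hX := coordPoint_mem_paramSet (K := K) hcl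
  have hne : Finsupp.single i (Fintype.card K) + Finsupp.single j 1 ≠
      Finsupp.single i 1 + Finsupp.single j (Fintype.card K) := fun h =>
    Fintype.one_lt_card.ne' (by simpa [hij.ne'] using congrArg (· i) h)
  obtain ⟨g, hgG, a, hag, ham⟩ := exists_mem_support_le_of_mem_span
    (hgen ▸ binomial_mem_vanishIdeal (paramSet v) i j) (mem_support_monomial_sub_monomial hne)
  obtain ⟨A, B, rfl⟩ := hbin g hgG
  have hI : monomial A (1 : K) - monomial B 1 ∈ vanishIdeal (paramSet v) :=
    hgen ▸ Ideal.subset_span hgG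
  have hAB : A ≠ B := by
    rintro rfl
    simp at hag
  obtain rfl | rfl : a = A ∨ a = B := by simpa [eq_comm] using support_sub _ _ _ hag
  · obtain ⟨c, hc, hcq, rfl, hB⟩ :=
      eq_single_add_single_of_sub_mem_vanishIdeal hX hij.ne hI hAB ham
    exact ⟨_, hgG, c, hc, hcq, B, hB, Or.inl rfl⟩
  · rw [← neg_mem_iff, neg_sub] at hI
    obtain ⟨c, hc, hcq, rfl, hA⟩ :=
      eq_single_add_single_of_sub_mem_vanishIdeal hX hij.ne hI hAB.symm ham
    exact ⟨_, hgG, c, hc, hcq, A, hA, Or.inr rfl⟩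

/-- If `X` is of clutter type and `G` is a minimal generating set of `I(X)` consisting of
binomials, then for each pair `i < j` there is `g_{ij} ∈ G` of the form
`±(t_i^{c_{ij}} t_j - t^{b_{ij}})` with `0 < c_{ij} ≤ q` and `b_{ij} ≠ 0`. -/
theorem stmt2 {K : Type} [Field K] [Fintype K] {n s : ℕ} (v : Fin s → Fin n → ℕ)
    (hcl : clutterType v) (G : Set (MvPolynomial (Fin s) K))
    (hgen : Ideal.span G = vanishIdeal (paramSet v))
    (hbin : ∀ g ∈ G, ∃ a b : Fin s →₀ ℕ, g = monomial a 1 - monomial b 1)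
    (hmin : ∀ g ∈ G, Ideal.span (G \ {g}) ≠ vanishIdeal (paramSet v)) :
    ∀ i j : Fin s, i < j → ∃ g ∈ G, ∃ c : ℕ, 0 < c ∧ c ≤ Fintype.card K ∧
      ∃ b : Fin s →₀ ℕ, b ≠ 0 ∧
        (g = monomial (Finsupp.single i c + Finsupp.single j 1) 1 - monomial b 1 ∨
         g = monomial b 1 - monomial (Finsupp.single i c + Finsupp.single j 1) 1) :=
  stmt2_general v hcl G hgen hbin
end

section
/- Let K = F_q, β a generator of the cyclic group F_q^*, k ∈ N, and r = ord(β^k) (so r divides q-1). Let X ⊆ P^1 be the set parameterized by the monomials y_1^{q-1} and y_2^{q-1}y_3^k. Then I(X) = (t_1^{r+1}t_2 - t_1t_2^{r+1}). -/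
open MvPolynomial

/-! The parametrized set consists of `(1 : 0)`, `(0 : 1)` and the points `(1 : u ^ k)` for units
`u`; the values `u ^ k` are exactly the `r`-th roots of unity, as `β ^ k` is a primitive `r`-th
root. Dehomogenizing at `X 1 = 1`, a binary form of degree `d` vanishing at these points becomes
a polynomial of degree `< d` vanishing at `0` and at every `r`-th root of unity, hence divisible
by `X ^ (r + 1) - X`; rehomogenizing, the form is divisible by
`X 0 ^ (r + 1) * X 1 - X 0 * X 1 ^ (r + 1)`. Conversely this form vanishes on the set because both
coordinates `a` of the parametrization satisfy `a ^ (r + 1) = a`. -/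

theorem MvPolynomial.IsHomogeneous.eval_smul {R σ : Type*} [CommSemiring R]
    {φ : MvPolynomial σ R} {n : ℕ} (hφ : φ.IsHomogeneous n) (c : R) (x : σ → R) :
    eval (c • x) φ = c ^ n * eval x φ := by
  conv_lhs => rw [φ.as_sum]
  conv_rhs => rw [φ.as_sum]
  simp only [map_sum, eval_monomial, Finset.mul_sum]
  refine Finset.sum_congr rfl fun m hm => ?_
  simp only [Pi.smul_apply, smul_eq_mul, mul_pow, Finsupp.prod_mul]
  rw [Finsupp.prod, Finset.prod_pow_eq_pow_sum, ← hφ.degree_eq_sum_deg_support hm]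
  ring

theorem MvPolynomial.IsHomogeneous.eval_rep_mk_eq_zero_iff {K : Type*} [Field K] {s d : ℕ}
    {g : MvPolynomial (Fin s) K} (hg : g.IsHomogeneous d) {w : Fin s → K} (hw : w ≠ 0) :
    eval (Projectivization.mk K w hw).rep g = 0 ↔ eval w g = 0 := by
  obtain ⟨a, ha⟩ := Projectivization.exists_smul_eq_mk_rep K w hw
  rw [← ha, Units.smul_def, hg.eval_smul]
  simp

theorem MvPolynomial.IsHomogeneous.natDegree_aeval_X_one_le {R : Type*} [CommSemiring R]
    {φ : MvPolynomial (Fin 2) R} {n : ℕ} (hφ : φ.IsHomogeneous n) :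
    (MvPolynomial.aeval ![(Polynomial.X : Polynomial R), 1] φ).natDegree ≤ n := by
  conv_lhs => rw [φ.as_sum]
  rw [map_sum]
  refine Polynomial.natDegree_sum_le_of_forall_le _ _ fun m hm => ?_
  have hdeg := hφ.degree_eq_sum_deg_support hm
  rw [← Finsupp.degree_apply, Finsupp.degree_eq_sum, Fin.sum_univ_two] at hdeg
  rw [aeval_monomial, Finsupp.prod_fintype _ _ (by simp), Fin.prod_univ_two]
  simp only [Matrix.cons_val_zero, Matrix.cons_val_one, one_pow, mul_one]
  exact (Polynomial.natDegree_C_mul_X_pow_le _ _).trans (by omega)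

namespace Polynomial

theorem eval_homogenize_one_zero {R : Type*} [CommSemiring R] (p : Polynomial R) (n : ℕ) :
    MvPolynomial.eval ![1, 0] (p.homogenize n) = p.coeff n := by
  rw [homogenize, map_sum, Finset.sum_eq_single (n, 0)]
  · simp [MvPolynomial.eval_monomial, Finsupp.prod_fintype]
  · rintro ⟨i, j⟩ hij hne
    have hj : j ≠ 0 := by rintro rfl; simp_all
    simp [MvPolynomial.eval_monomial, Finsupp.prod_fintype, hj]
  · simp

theorem homogenize_X_pow_succ_sub_X {R : Type*} [CommRing R] (r : ℕ) :
    (X ^ (r + 1) - X : Polynomial R).homogenize (r + 2) =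
      .X 0 ^ (r + 1) * .X 1 - .X 0 * .X 1 ^ (r + 1) := by
  rw [homogenize_sub, homogenize_X_pow (by omega), homogenize_X (by omega)]
  simp

theorem prod_X_sub_C_dvd_of_isRoot {R : Type*} [CommRing R] [IsDomain R] {p : Polynomial R}
    (hp : p ≠ 0) (S : Finset R) (hS : ∀ s ∈ S, p.IsRoot s) : ∏ s ∈ S, (X - C s) ∣ p := by
  rw [← Finset.prod_map_val, Multiset.prod_X_sub_C_dvd_iff_le_roots hp,
    Multiset.le_iff_subset S.nodup]
  exact fun s hs => (mem_roots hp).mpr (hS s hs)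

theorem zero_notMem_nthRootsFinset {R : Type*} [CommRing R] [IsDomain R]
    {r : ℕ} (hr : 0 < r) : (0 : R) ∉ nthRootsFinset r (1 : R) := by
  simp [mem_nthRootsFinset hr, zero_pow hr.ne']

theorem X_pow_succ_sub_X_eq_prod {K : Type*} [Field K] [DecidableEq K] {ζ : K} {r : ℕ}
    (hζ : IsPrimitiveRoot ζ r) (hr : 0 < r) :
    X ^ (r + 1) - X = ∏ s ∈ insert 0 (nthRootsFinset r (1 : K)), (X - C s) := by
  rw [Finset.prod_insert (zero_notMem_nthRootsFinset hr), ← X_pow_sub_one_eq_prod hr hζ]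
  simp only [map_zero, sub_zero]
  ring

end Polynomial

theorem MvPolynomial.IsHomogeneous.homogenize_prod_X_sub_C_dvd {K : Type*} [Field K]
    {g : MvPolynomial (Fin 2) K} {d : ℕ} (hg : g.IsHomogeneous d) (S : Finset K)
    (hS : ∀ s ∈ S, eval ![s, 1] g = 0) (hinf : eval ![1, 0] g = 0) :
    (∏ s ∈ S, (Polynomial.X - Polynomial.C s)).homogenize (S.card + 1) ∣ g := by
  set P := MvPolynomial.aeval ![(Polynomial.X : Polynomial K), 1] g
  have hgP : P.homogenize d = g := Polynomial.homogenize_eq_of_isHomogeneous hg rfl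
  have hPd : P.natDegree ≤ d := hg.natDegree_aeval_X_one_le
  rcases eq_or_ne P 0 with hP | hP
  · simp [← hgP, hP]
  have hroots : ∀ s ∈ S, P.IsRoot s := fun s hs => by
    have h := Polynomial.eval_homogenize hPd ![s, 1] one_ne_zero
    rw [hgP, hS s hs] at h
    simpa using h.symm
  have hPlt : P.natDegree < d := by
    refine lt_of_le_of_ne hPd fun h => hP ?_
    rw [← Polynomial.leadingCoeff_eq_zero, Polynomial.leadingCoeff, h,
      ← Polynomial.eval_homogenize_one_zero, hgP, hinf]
  obtain ⟨Q, hPQ⟩ := Polynomial.prod_X_sub_C_dvd_of_isRoot hP S hroots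
  set F := ∏ s ∈ S, (Polynomial.X - Polynomial.C s)
  have hF : F.Monic := Polynomial.monic_prod_X_sub_C id S
  have hFdeg : F.natDegree = S.card := Polynomial.natDegree_finsetProd_X_sub_C_eq_card S id
  have hQ : Q ≠ 0 := by rintro rfl; exact hP (by rw [hPQ, mul_zero])
  have hPdeg : P.natDegree = S.card + Q.natDegree := by
    rw [hPQ, Polynomial.natDegree_mul hF.ne_zero hQ, hFdeg]
  have hsplit := Polynomial.homogenize_mul F Q (m := S.card + 1) (n := d - (S.card + 1))
    (by omega) (by omega)
  rw [Nat.add_sub_cancel' (by omega), ← hPQ, hgP] at hsplit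
  exact ⟨_, hsplit⟩

theorem MvPolynomial.IsHomogeneous.dvd_of_eval_eq_zero_of_isPrimitiveRoot {K : Type*} [Field K]
    {g : MvPolynomial (Fin 2) K} {d : ℕ} (hg : g.IsHomogeneous d) {ζ : K} {r : ℕ}
    (hζ : IsPrimitiveRoot ζ r) (hr : 0 < r) (hzero : eval ![0, 1] g = 0)
    (hinf : eval ![1, 0] g = 0) (hroots : ∀ c : K, c ^ r = 1 → eval ![c, 1] g = 0) :
    X 0 ^ (r + 1) * X 1 - X 0 * X 1 ^ (r + 1) ∣ g := by
  classical
  set S := insert 0 (Polynomial.nthRootsFinset r (1 : K))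
  have hS : ∀ s ∈ S, eval ![s, 1] g = 0 := by
    simpa [S, Polynomial.mem_nthRootsFinset hr, hzero] using hroots
  have hcard : S.card + 1 = r + 2 := by
    rw [Finset.card_insert_of_notMem (Polynomial.zero_notMem_nthRootsFinset hr),
      hζ.card_nthRootsFinset]
  have hdvd := hg.homogenize_prod_X_sub_C_dvd S hS hinf
  rwa [hcard, ← Polynomial.X_pow_succ_sub_X_eq_prod hζ hr,
    Polynomial.homogenize_X_pow_succ_sub_X] at hdvd

theorem pow_pow_orderOf_pow_eq_one {G : Type*} [CommGroup G] {β : G}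
    (hβ : ∀ u : G, u ∈ Subgroup.zpowers β) (k : ℕ) (u : G) :
    (u ^ k) ^ orderOf (β ^ k) = 1 := by
  have hu : u ^ k ∈ Subgroup.zpowers (β ^ k) := by
    rw [← powMonoidHom_apply, ← powMonoidHom_apply, ← MonoidHom.map_zpowers]
    exact Subgroup.mem_map_of_mem _ (hβ u)
  exact orderOf_dvd_iff_pow_eq_one.mp (orderOf_dvd_of_mem_zpowers hu)

theorem FiniteField.pow_card_sub_one_pow_succ {K : Type*} [Field K] [Fintype K] (y : K)
    (n : ℕ) : (y ^ (Fintype.card K - 1)) ^ (n + 1) = y ^ (Fintype.card K - 1) := by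
  rcases eq_or_ne y 0 with rfl | hy
  · have := Fintype.one_lt_card (α := K)
    rw [zero_pow (by omega), zero_pow n.succ_ne_zero]
  · rw [FiniteField.pow_card_sub_one_eq_one y hy, one_pow]

theorem pow_pow_succ_eq_self {K : Type*} [Field K] {k r : ℕ}
    (hunit : ∀ u : Kˣ, ((u : K) ^ k) ^ r = 1) (x : K) : (x ^ k) ^ (r + 1) = x ^ k := by
  rcases eq_or_ne x 0 with rfl | hx
  · rcases eq_or_ne k 0 with rfl | hk
    · simp
    · simp [zero_pow hk]
  · rw [pow_succ, ← Units.val_mk0 hx, hunit, one_mul]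

theorem vanishIdeal_paramSet_eq_span_singleton {K : Type} [Field K] {n s e : ℕ}
    {v : Fin s → Fin n → ℕ} {f : MvPolynomial (Fin s) K} (hf : f.IsHomogeneous e)
    (hf_eval : ∀ x, eval (monEval v x) f = 0)
    (hf_dvd : ∀ g d, g.IsHomogeneous d →
      (∀ x, monEval v x ≠ 0 → eval (monEval v x) g = 0) → f ∣ g) :
    vanishIdeal (paramSet v) = Ideal.span {f} := by
  have hvanish : ∀ {g : MvPolynomial (Fin s) K} {d : ℕ}, g.IsHomogeneous d →
      ((∀ p ∈ paramSet v, eval p.rep g = 0) ↔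
        ∀ x, monEval v x ≠ 0 → eval (monEval v x) g = 0) := fun hg =>
    ⟨fun h x hx => (hg.eval_rep_mk_eq_zero_iff hx).mp (h _ ⟨x, hx, rfl⟩),
      fun h _ ⟨x, hx, hp⟩ => hp ▸ (hg.eval_rep_mk_eq_zero_iff hx).mpr (h x hx)⟩
  apply le_antisymm
  · rw [vanishIdeal, Ideal.span_le]
    rintro g ⟨⟨d, hg⟩, hg_eval⟩
    exact Ideal.mem_span_singleton.mpr (hf_dvd g d hg ((hvanish hg).mp hg_eval))
  · rw [Ideal.span_singleton_le_iff_mem]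
    exact Ideal.subset_span ⟨⟨e, hf⟩, (hvanish hf).mpr fun x _ => hf_eval x⟩

theorem monEval_eq {K : Type} [Field K] (e k : ℕ) (x : Fin 3 → K) :
    monEval ![![e, 0, 0], ![0, e, k]] x = ![x 0 ^ e, x 1 ^ e * x 2 ^ k] := by
  ext i
  fin_cases i <;> simp [monEval, Fin.prod_univ_three]

theorem dvd_of_forall_eval_monEval_eq_zero {K : Type} [Field K] {e k r : ℕ} (he : e ≠ 0)
    {β : Kˣ} (hζ : IsPrimitiveRoot ((β : K) ^ k) r) (hr : 0 < r)
    {g : MvPolynomial (Fin 2) K} {d : ℕ} (hg : g.IsHomogeneous d)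
    (hg_eval : ∀ x, monEval ![![e, 0, 0], ![0, e, k]] x ≠ 0 →
      eval (monEval ![![e, 0, 0], ![0, e, k]] x) g = 0) :
    X 0 ^ (r + 1) * X 1 - X 0 * X 1 ^ (r + 1) ∣ g := by
  simp only [monEval_eq] at hg_eval
  refine hg.dvd_of_eval_eq_zero_of_isPrimitiveRoot hζ hr ?_ ?_ fun c hc => ?_
  · simpa [he] using hg_eval ![0, 1, 1]
  · simpa [he] using hg_eval ![1, 0, 0]
  · have hc0 : c ≠ 0 := by rintro rfl; simp [zero_pow hr.ne'] at hc
    have : NeZero r := ⟨hr.ne'⟩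
    obtain ⟨i, -, hi⟩ := hζ.eq_pow_of_pow_eq_one (ξ := c⁻¹) (by rw [inv_pow, hc, inv_one])
    have h : eval ![1, c⁻¹] g = 0 := by
      simpa [← hi, ← pow_mul, mul_comm i k] using hg_eval ![1, 1, (β : K) ^ i]
    have hsmul : ![c, 1] = c • ![1, c⁻¹] := by
      ext j; fin_cases j <;> simp [hc0]
    rw [hsmul, hg.eval_smul, h, mul_zero]

theorem eval_monEval_eq_zero {K : Type} [Field K] [Fintype K] {k r : ℕ}
    (hunit : ∀ u : Kˣ, ((u : K) ^ k) ^ r = 1) (x : Fin 3 → K) :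
    eval (monEval ![![Fintype.card K - 1, 0, 0], ![0, Fintype.card K - 1, k]] x)
      (X 0 ^ (r + 1) * X 1 - X 0 * X 1 ^ (r + 1)) = 0 := by
  simp only [monEval_eq, map_sub, map_mul, map_pow, eval_X, Matrix.cons_val_zero,
    Matrix.cons_val_one]
  rw [FiniteField.pow_card_sub_one_pow_succ, mul_pow, FiniteField.pow_card_sub_one_pow_succ,
    pow_pow_succ_eq_self hunit, sub_self]

/-- Let `β` be a generator of the cyclic group `F_q^*`, `k ∈ ℕ`, and `r = ord(β^k)`.
Let `X ⊆ ℙ¹` be the set parameterized by the monomials `y_1^{q-1}` and `y_2^{q-1}y_3^k`.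
Then `I(X) = (t_1^{r+1}t_2 - t_1t_2^{r+1})`, and `r` divides `q - 1`. -/
theorem stmt14 {K : Type} [Field K] [Fintype K] (β : Kˣ)
    (hβ : ∀ u : Kˣ, u ∈ Subgroup.zpowers β) (k : ℕ) (r : ℕ) (hr : r = orderOf (β ^ k)) :
    r ∣ Fintype.card K - 1 ∧
    vanishIdeal (paramSet (K := K)
        ![![Fintype.card K - 1, 0, 0], ![0, Fintype.card K - 1, k]]) =
      Ideal.span {X 0 ^ (r + 1) * X 1 - X 0 * X 1 ^ (r + 1)} := by
  classical
  have hq : Fintype.card K - 1 ≠ 0 := by have := Fintype.one_lt_card (α := K); omega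
  have hr0 : 0 < r := hr ▸ orderOf_pos (β ^ k)
  have hζ : IsPrimitiveRoot ((β : K) ^ k) r := by
    rw [← Units.val_pow_eq_pow_val, IsPrimitiveRoot.coe_units_iff, hr]
    exact IsPrimitiveRoot.orderOf _
  have hunit : ∀ u : Kˣ, ((u : K) ^ k) ^ r = 1 := fun u => by
    rw [← Units.val_pow_eq_pow_val, ← Units.val_pow_eq_pow_val, hr,
      pow_pow_orderOf_pow_eq_one hβ, Units.val_one]
  have hf : (X 0 ^ (r + 1) * X 1 - X 0 * X 1 ^ (r + 1) : MvPolynomial (Fin 2) K).IsHomogeneous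
      (r + 2) := by
    refine ((isHomogeneous_X_pow _ _).mul (isHomogeneous_X K 1)).sub ?_
    simpa only [add_comm 1] using (isHomogeneous_X K 0).mul (isHomogeneous_X_pow 1 (r + 1))
  refine ⟨hr ▸ Fintype.card_units (α := K) ▸ orderOf_dvd_card, ?_⟩
  exact vanishIdeal_paramSet_eq_span_singleton hf (eval_monEval_eq_zero hunit)
    fun g d hg hg_eval => dvd_of_forall_eval_monEval_eq_zero hq hζ hr0 hg hg_eval
end
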